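/- (Lemma 2) The image of the space R_𝐝 of multihomogeneous polynomials of multidegree 𝐝 under the substitution map u is exactly 𝒜; that is, u(R_𝐝) = 𝒜. -/

import Mathlib

/-!
The substitution `u` is the renaming of variables along `substVar`, which sends `x_{0,j}` to `z_0`
and is injective on the remaining variables. A renaming maps the polynomials supported on a set `E`
of exponent vectors onto the polynomials supported on the image of `E` (lift every monomial of the
target back to a preimage exponent in `E`), so the lemma is a statement about exponent vectors.
An exponent with block sums `d_j` is sent to one of total degree `d` whose `j`-th block, having lost
the exponent of `x_{0,j}`, has degree at most `d_j`; conversely an exponent in `𝒜` lifts by giving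
`x_{0,j}` the missing `d_j` minus the degree of its `j`-th block.
-/

open MvPolynomial

/-- Variables of `R`: `x_{i,j}` for `j : Fin s`, `i : Fin (n j + 1)` (index `0` is `x_{0,j}`). -/
abbrev RVar (s : ℕ) (n : Fin s → ℕ) := Σ j : Fin s, Fin (n j + 1)

/-- Variables of `S`: `none` is `z_0`, `some ⟨j,i⟩` is `z_{i+1,j}`. -/
abbrev SVar (s : ℕ) (n : Fin s → ℕ) := Option (Σ j : Fin s, Fin (n j))

/-- `f` is multihomogeneous of multidegree `d`. -/
def MultiHomog {K : Type*} [CommSemiring K] {s : ℕ} {n : Fin s → ℕ} (d : Fin s → ℕ)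
    (f : MvPolynomial (RVar s n) K) : Prop :=
  ∀ m ∈ f.support, ∀ j : Fin s, ∑ i : Fin (n j + 1), m ⟨j, i⟩ = d j

/-- The substitution `u : R → S`, `x_{0,j} ↦ z_0`, `x_{i,j} ↦ z_{i,j}` for `i ≥ 1`. -/
noncomputable def subst (K : Type*) [CommSemiring K] (s : ℕ) (n : Fin s → ℕ) :
    MvPolynomial (RVar s n) K →ₐ[K] MvPolynomial (SVar s n) K :=
  aeval fun v => if h : (v.2 : ℕ) = 0 then X none
    else X (some ⟨v.1, ⟨(v.2 : ℕ) - 1, by have := v.2.isLt; omega⟩⟩)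

theorem MvPolynomial.image_rename_setOf_support_subset {R σ τ : Type*} [CommSemiring R]
    (f : σ → τ) (E : Set (σ →₀ ℕ)) :
    rename f '' {p : MvPolynomial σ R | ↑p.support ⊆ E} =
      {q | ↑q.support ⊆ Finsupp.mapDomain f '' E} := by
  ext q
  constructor
  · rintro ⟨p, hp, rfl⟩ m hm
    obtain ⟨μ, rfl, hμ⟩ := coeff_rename_ne_zero f p m (mem_support_iff.mp hm)
    exact ⟨μ, hp (mem_support_iff.mpr hμ), rfl⟩
  · intro hq
    classical
    have hlift : ∀ m ∈ q.support, ∃ μ ∈ E, Finsupp.mapDomain f μ = m := fun m hm => hq hm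
    choose! μ hμE hμ using hlift
    refine ⟨∑ m ∈ q.support, monomial (μ m) (q.coeff m), fun ν hν => ?_, ?_⟩
    · obtain ⟨m, hm, hνm⟩ := Finset.mem_biUnion.mp (support_sum hν)
      rw [Finset.mem_singleton.mp (support_monomial_subset hνm)]
      exact hμE m hm
    · rw [map_sum]
      calc ∑ m ∈ q.support, rename f (monomial (μ m) (q.coeff m))
          = ∑ m ∈ q.support, monomial m (q.coeff m) :=
            Finset.sum_congr rfl fun m hm => by rw [rename_monomial, hμ m hm]
        _ = q := support_sum_monomial_coeff q

theorem Finsupp.mapDomain_apply_eq_sum_filter {α β M : Type*} [Fintype α] [DecidableEq β]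
    [AddCommMonoid M] (f : α → β) (x : α →₀ M) (b : β) :
    x.mapDomain f b = ∑ a with f a = b, x a := by
  simp [mapDomain, sum_fintype, single_apply, Finset.sum_filter]

section Exponents

variable {s : ℕ} {n : Fin s → ℕ}

def substVar (s : ℕ) (n : Fin s → ℕ) (v : RVar s n) : SVar s n :=
  Fin.cases none (fun i => some ⟨v.1, i⟩) v.2

theorem subst_eq_rename (K : Type*) [CommSemiring K] (s : ℕ) (n : Fin s → ℕ) :
    subst K s n = rename (substVar s n) := by
  refine algHom_ext fun ⟨j, i⟩ => ?_
  cases i using Fin.cases with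
  | zero => simp [subst, substVar]
  | succ i =>
    simp only [subst, substVar, aeval_X, rename_X, Fin.val_succ, Fin.cases_succ]
    rw [dif_neg (Nat.succ_ne_zero _)]
    rfl

theorem substVar_eq_none_iff (v : RVar s n) : substVar s n v = none ↔ v.2 = 0 := by
  obtain ⟨j, i⟩ := v
  cases i using Fin.cases <;> simp [substVar, Fin.succ_ne_zero]

theorem substVar_eq_some_iff (v : RVar s n) (j : Fin s) (i : Fin (n j)) :
    substVar s n v = some ⟨j, i⟩ ↔ v = ⟨j, i.succ⟩ := by
  obtain ⟨j', i'⟩ := v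
  cases i' using Fin.cases with
  | zero =>
    simp only [substVar, Fin.cases_zero, reduceCtorEq, false_iff, Sigma.mk.inj_iff, not_and]
    rintro rfl h
    exact Fin.succ_ne_zero i (eq_of_heq h).symm
  | succ i' =>
    simp only [substVar, Fin.cases_succ, Option.some.injEq, Sigma.mk.inj_iff]
    constructor <;> rintro ⟨rfl, h⟩ <;> simpa using h

theorem mapDomain_substVar_none (μ : RVar s n →₀ ℕ) :
    μ.mapDomain (substVar s n) none = ∑ j, μ ⟨j, 0⟩ := by
  rw [Finsupp.mapDomain_apply_eq_sum_filter, Finset.sum_filter, Fintype.sum_sigma]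
  simp only [substVar_eq_none_iff]
  exact Finset.sum_congr rfl fun j _ => Fintype.sum_ite_eq' (0 : Fin (n j + 1)) _

theorem mapDomain_substVar_some (μ : RVar s n →₀ ℕ) (j : Fin s) (i : Fin (n j)) :
    μ.mapDomain (substVar s n) (some ⟨j, i⟩) = μ ⟨j, i.succ⟩ := by
  rw [Finsupp.mapDomain_apply_eq_sum_filter]
  simp [substVar_eq_some_iff, Finset.filter_eq']

theorem sum_sVar (m : SVar s n →₀ ℕ) :
    ∑ v, m v = m none + ∑ j, ∑ i : Fin (n j), m (some ⟨j, i⟩) := by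
  rw [Fintype.sum_option, Fintype.sum_sigma]

noncomputable def liftExponent (d : Fin s → ℕ) (m : SVar s n →₀ ℕ) : RVar s n →₀ ℕ :=
  Finsupp.equivFunOnFinite.symm fun v =>
    Fin.cases (d v.1 - ∑ i, m (some ⟨v.1, i⟩)) (fun i => m (some ⟨v.1, i⟩)) v.2

@[simp]
theorem liftExponent_zero (d : Fin s → ℕ) (m : SVar s n →₀ ℕ) (j : Fin s) :
    liftExponent d m ⟨j, 0⟩ = d j - ∑ i, m (some ⟨j, i⟩) := rfl

@[simp]
theorem liftExponent_succ (d : Fin s → ℕ) (m : SVar s n →₀ ℕ) (j : Fin s) (i : Fin (n j)) :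
    liftExponent d m ⟨j, i.succ⟩ = m (some ⟨j, i⟩) := rfl

theorem image_mapDomain_substVar (d : Fin s → ℕ) :
    Finsupp.mapDomain (substVar s n) '' {μ : RVar s n →₀ ℕ | ∀ j, ∑ i, μ ⟨j, i⟩ = d j} =
      {m | ∑ v, m v = ∑ j, d j ∧ ∀ j, ∑ i : Fin (n j), m (some ⟨j, i⟩) ≤ d j} := by
  ext m
  constructor
  · rintro ⟨μ, hμ, rfl⟩
    have hblock : ∀ j,
        ∑ i, μ.mapDomain (substVar s n) (some ⟨j, i⟩) = ∑ i : Fin (n j), μ ⟨j, i.succ⟩ :=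
      fun j => Finset.sum_congr rfl fun i _ => mapDomain_substVar_some μ j i
    have hd : ∀ j, μ ⟨j, 0⟩ + ∑ i : Fin (n j), μ ⟨j, i.succ⟩ = d j := fun j => by
      rw [← Fin.sum_univ_succ (fun i => μ ⟨j, i⟩), hμ j]
    refine ⟨?_, fun j => ?_⟩
    · rw [sum_sVar, mapDomain_substVar_none, Finset.sum_congr rfl fun j _ => hblock j,
        ← Finset.sum_add_distrib]
      exact Finset.sum_congr rfl fun j _ => hd j
    · rw [hblock, ← hd j]
      exact Nat.le_add_left _ _
  · rintro ⟨htotal, hle⟩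
    refine ⟨liftExponent d m, fun j => ?_, ?_⟩
    · rw [Fin.sum_univ_succ]
      simpa using Nat.sub_add_cancel (hle j)
    · ext (_ | ⟨j, i⟩)
      · have hsplit : ∑ j, (d j - ∑ i, m (some ⟨j, i⟩)) + ∑ j, ∑ i, m (some ⟨j, i⟩) =
            ∑ j, d j := by
          rw [← Finset.sum_add_distrib]
          exact Finset.sum_congr rfl fun j _ => Nat.sub_add_cancel (hle j)
        rw [sum_sVar] at htotal
        simp only [mapDomain_substVar_none, liftExponent_zero]
        omega
      · rw [mapDomain_substVar_some, liftExponent_succ]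

end Exponents

theorem stmt4_general (K : Type*) [Field K] (s : ℕ) (n : Fin s → ℕ)
    (d : Fin s → ℕ) :
    (subst K s n) '' {f | MultiHomog d f} =
      {g : MvPolynomial (SVar s n) K | ∀ m ∈ g.support,
        (∑ v : SVar s n, m v) = (∑ j, d j) ∧
        ∀ j : Fin s, (∑ i : Fin (n j), m (some ⟨j, i⟩)) ≤ d j} := by
  have h := image_rename_setOf_support_subset (R := K) (substVar s n)
    {μ | ∀ j, ∑ i, μ ⟨j, i⟩ = d j}
  rw [image_mapDomain_substVar] at h
  rw [subst_eq_rename]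
  -- both sides of `h` agree with the goal's sets up to unfolding `MultiHomog` and `⊆`
  exact h

/-- **Lemma 2.** The image under `u` of the space `R_𝐝` of multihomogeneous
polynomials of multidegree `𝐝` is exactly `𝒜`, the set of polynomials all of whose
monomials have total degree `d = ∑ d j` and degree at most `d j` in the `j`-th block of
variables for each `j`. -/
theorem stmt4 (K : Type*) [Field K] (s : ℕ) (hs : 0 < s) (n : Fin s → ℕ) (hn : ∀ j, 0 < n j)
    (d : Fin s → ℕ) :
    (subst K s n) '' {f | MultiHomog d f} =
      {g : MvPolynomial (SVar s n) K | ∀ m ∈ g.support,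
        (∑ v : SVar s n, m v) = (∑ j, d j) ∧
        ∀ j : Fin s, (∑ i : Fin (n j), m (some ⟨j, i⟩)) ≤ d j} :=
  stmt4_general K s n d
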